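/- arXiv:2303.07061 — 4 statements merged into one kernel-verified Lean document; each statement's English description precedes it below -/
import Mathlib

section
/- Let W be a complex vector space and let T = W × W with ℂ-linear endomorphisms I(h,v) = (i·h, −i·v), J(h,v) = (v, −h), K(h,v) = (i·v, i·h). Then for every ε ∈ ℂ∖{0}, the image of the linear map W → T, w ↦ (w, ε⁻¹w), equals the kernel of the endomorphism ε⁻²(J + iK) + 2iε⁻¹I + (J − iK). Moreover, the kernel of J − iK equals W × {0}. -/
/-- Pointwise form of the identity `H(ε) = im(h + ε⁻¹v) = ker(ε⁻²(J+iK) + 2iε⁻¹I + (J−iK))`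
for the complex hyperkähler structure of a pre-Joyce structure, together with
`ker(J − iK) = W × {0}`. -/
theorem horizontal_distribution_eq_kernel (W : Type*) [AddCommGroup W] [Module ℂ W]
    (I J K : (W × W) →ₗ[ℂ] (W × W))
    (hI : ∀ h v : W, I (h, v) = (Complex.I • h, -(Complex.I • v)))
    (hJ : ∀ h v : W, J (h, v) = (v, -h))
    (hK : ∀ h v : W, K (h, v) = (Complex.I • v, Complex.I • h)) :
    (∀ ε : ℂ, ε ≠ 0 →
      Set.range (fun w : W => (w, ε⁻¹ • w)) =
        {t : W × W |
          (ε⁻¹ ^ 2 • (J + Complex.I • K) + (2 * Complex.I * ε⁻¹) • I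
            + (J - Complex.I • K)) t = 0}) ∧
    {t : W × W | (J - Complex.I • K) t = 0} = Set.univ ×ˢ ({0} : Set W) := by
  constructor
  · intro ε hε
    have h2I : 2 * Complex.I * ε⁻¹ * Complex.I = -(2 * ε⁻¹) := by
      linear_combination 2 * ε⁻¹ * Complex.I_sq
    ext ⟨h, v⟩
    simp only [Set.mem_range, Set.mem_setOf_eq, LinearMap.add_apply, LinearMap.sub_apply,
      LinearMap.smul_apply, hI h v, hJ h v, hK h v, Prod.smul_mk, Prod.mk_add_mk,
      Prod.mk_sub_mk, Prod.mk.injEq, Prod.ext_iff, Prod.fst_zero, Prod.snd_zero,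
      smul_neg, smul_smul, Complex.I_mul_I, neg_smul, one_smul, neg_neg, h2I]
    constructor
    · rintro ⟨w, hw, hw'⟩
      subst hw; subst hw'
      constructor <;> module
    · rintro ⟨h1, h2⟩
      refine ⟨h, rfl, ?_⟩
      -- derive v = ε⁻¹ • h from h1
      have key : (2 : ℂ) • v = (2 * ε⁻¹) • h := by
        have := h1
        -- first component equation
        linear_combination (norm := module) this
      have : v = ε⁻¹ • h := by
        have h2' := congrArg (fun x => (2⁻¹ : ℂ) • x) key
        simpa [smul_smul, mul_comm, mul_assoc, mul_left_comm] using h2'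
      exact this.symm
  · ext ⟨h, v⟩
    simp only [Set.mem_setOf_eq, LinearMap.sub_apply, LinearMap.smul_apply,
      hJ h v, hK h v, Prod.smul_mk, Prod.mk_sub_mk, Prod.ext_iff, Prod.fst_zero, Prod.snd_zero,
      smul_smul, Complex.I_mul_I, neg_smul, one_smul, sub_neg_eq_add, Set.mem_prod,
      Set.mem_univ, Set.mem_singleton_iff, true_and]
    constructor
    · rintro ⟨hv, -⟩
      have : (2 : ℂ) • v = 0 := by
        rw [two_smul]; exact hv
      simpa using (smul_eq_zero.mp this).resolve_left (by norm_num)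
    · rintro rfl
      simp
end

section
/- Let n ≥ 1, let η = (η_{pq}) be an invertible skew-symmetric n×n complex matrix, let U ⊆ ℂ^{2n} be open with coordinates (z₁,…,z_n,θ₁,…,θ_n), and let W₁,…,W_n : U → ℂ be holomorphic. Define vector fields on U by v_i = ∂/∂θ_i and h_i = ∂/∂z_i + Σ_{p,q} η_{pq}·(∂W_i/∂θ_p)·∂/∂θ_q. Then [h_i + ε⁻¹v_i, h_j + ε⁻¹v_j] = 0 on U for all i, j and all ε ∈ ℂ∖{0} if and only if for all i, j, k: (∂/∂θ_k)(∂W_i/∂θ_j − ∂W_j/∂θ_i) = 0 and (∂/∂θ_k)(∂W_i/∂z_j − ∂W_j/∂z_i − Σ_{p,q} η_{pq}·(∂W_i/∂θ_p)·(∂W_j/∂θ_q)) = 0 on U. -/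
/-!
A holomorphic function of several variables is `C²`: its derivative in a direction `u` is the
one-variable Cauchy integral of `ζ ↦ f (x + ζ • u)` over a small circle, which can be
differentiated under the integral sign thanks to the Cauchy estimates. Hence the mixed partials of
the `W i` commute, and the bracket of `h_i + ε⁻¹ v_i` and `h_j + ε⁻¹ v_j` is vertical with
`θ`-part `-(∂_θ curlz + ε⁻¹ ∂_θ curlθ) ᵥ* η`, where skew-symmetry of `η` is what turns the
quadratic terms into the `θ`-derivative of `∑ η p q ∂_p W_i ∂_q W_j`. As `η` is invertible and an
affine function of `ε⁻¹` vanishing for all `ε ≠ 0` has both coefficients zero, the bracket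
vanishes for all `ε` exactly when both `θ`-derivatives do.
-/

/-- The Lie bracket of vector fields on an open subset of a complex normed space:
`[X,Y](x) = DY(x)(X(x)) − DX(x)(Y(x))`. -/
noncomputable def vecBracket {E : Type*} [NormedAddCommGroup E] [NormedSpace ℂ E]
    (X Y : E → E) (x : E) : E :=
  fderiv ℂ Y x (X x) - fderiv ℂ X x (Y x)

/-- Partial derivative `∂f/∂z_j` on `ℂ^{2n}` with coordinates `(z, θ)`. -/
noncomputable def dz {n : ℕ} (f : (Fin n → ℂ) × (Fin n → ℂ) → ℂ) (j : Fin n)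
    (x : (Fin n → ℂ) × (Fin n → ℂ)) : ℂ :=
  fderiv ℂ f x (Pi.single j 1, 0)

/-- Partial derivative `∂f/∂θ_j` on `ℂ^{2n}` with coordinates `(z, θ)`. -/
noncomputable def dθ {n : ℕ} (f : (Fin n → ℂ) × (Fin n → ℂ) → ℂ) (j : Fin n)
    (x : (Fin n → ℂ) × (Fin n → ℂ)) : ℂ :=
  fderiv ℂ f x (0, Pi.single j 1)

open Complex Metric Set Filter Topology MeasureTheory Real
open scoped Matrix

theorem forall_add_inv_mul_eq_zero_iff {K : Type*} [Field K] [CharZero K] {a b : K} :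
    (∀ ε : K, ε ≠ 0 → a + ε⁻¹ * b = 0) ↔ a = 0 ∧ b = 0 := by
  refine ⟨fun h => ?_, fun ⟨ha, hb⟩ ε _ => by simp [ha, hb]⟩
  have h1 := h 1 one_ne_zero
  have h2 := h 2 two_ne_zero
  norm_num at h1 h2
  constructor
  · linear_combination 2 * h2 - h1
  · linear_combination 2 * h1 - 2 * h2

section Holomorphic

variable {E : Type*} [NormedAddCommGroup E] [NormedSpace ℂ E] {U : Set E}

theorem exists_ball_forall_norm_fderiv_le {F : Type*} [NormedAddCommGroup F] [NormedSpace ℂ F]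
    {f : E → F} (hU : IsOpen U) (hf : DifferentiableOn ℂ f U) {x₀ : E} (hx₀ : x₀ ∈ U) :
    ∃ r > 0, ball x₀ r ⊆ U ∧ ∃ C, ∀ y ∈ ball x₀ r, ‖fderiv ℂ f y‖ ≤ C := by
  have hnhds : U ∩ f ⁻¹' ball (f x₀) 1 ∈ 𝓝 x₀ :=
    inter_mem (hU.mem_nhds hx₀) ((hf.continuousOn.continuousAt (hU.mem_nhds hx₀)).preimage_mem_nhds
      (ball_mem_nhds _ one_pos))
  obtain ⟨ε, hε, hball⟩ := Metric.mem_nhds_iff.1 hnhds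
  refine ⟨ε / 2, by positivity, (ball_subset_ball (by linarith)).trans fun z hz => (hball hz).1,
    2 / (ε / 2), fun y hy => ?_⟩
  have hsub : ball y (ε / 2) ⊆ ball x₀ ε :=
    ball_subset_ball' (by rw [mem_ball] at hy; linarith)
  -- `f` moves by less than `2` on `ball y (ε / 2)`; Schwarz's lemma turns this into the bound
  refine Complex.norm_fderiv_le_div_of_mapsTo_ball (hf.mono fun z hz => (hball (hsub hz)).1)
    (fun z hz => ?_) (by positivity)
  have hz := (hball (hsub hz)).2
  have hy' := (hball (ball_subset_ball (by linarith) hy)).2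
  rw [mem_preimage, mem_ball] at hz hy'
  rw [mem_closedBall]
  linarith [dist_triangle_right (f z) (f y) (f x₀)]

theorem fderiv_apply_eq_cderiv {F : Type*} [NormedAddCommGroup F] [NormedSpace ℂ F]
    [CompleteSpace F] {f : E → F} (hU : IsOpen U) (hf : DifferentiableOn ℂ f U)
    {x u : E} {ρ : ℝ} (hρ : 0 < ρ) (hxu : ∀ ζ ∈ closedBall (0 : ℂ) ρ, x + ζ • u ∈ U) :
    fderiv ℂ f x u = cderiv ρ (fun ζ : ℂ => f (x + ζ • u)) 0 := by
  have hline : Differentiable ℂ fun ζ : ℂ => x + ζ • u := by fun_prop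
  have hV : IsOpen ((fun ζ : ℂ => x + ζ • u) ⁻¹' U) := hU.preimage hline.continuous
  have hx : x ∈ U := by simpa using hxu 0 (mem_closedBall_self hρ.le)
  rw [cderiv_eq_deriv (f := fun ζ : ℂ => f (x + ζ • u)) hV
    (hf.comp hline.differentiableOn (mapsTo_preimage _ _)) hρ hxu]
  refine (HasFDerivAt.comp_hasDerivAt_of_eq (f := fun ζ : ℂ => x + ζ • u) 0
    (hf.differentiableAt (hU.mem_nhds hx)).hasFDerivAt ?_ (by simp)).deriv.symm
  simpa using ((hasDerivAt_id (0 : ℂ)).smul_const u).const_add x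

theorem add_smul_mem_ball {x₀ x u : E} {r ρ : ℝ} {ζ : ℂ} (hx : x ∈ ball x₀ (r / 2))
    (hζ : ‖ζ‖ ≤ ρ) (hρ : ρ * ‖u‖ ≤ r / 2) : x + ζ • u ∈ ball x₀ r := by
  rw [mem_ball] at hx ⊢
  calc dist (x + ζ • u) x₀ ≤ dist x x₀ + ‖ζ‖ * ‖u‖ := by
        rw [dist_eq_norm, dist_eq_norm, add_sub_right_comm, ← norm_smul]
        exact norm_add_le _ _
    _ < r := by nlinarith [norm_nonneg u]

variable [FiniteDimensional ℂ E]

theorem differentiableAt_intervalIntegral_smul_comp_add {f : E → ℂ} {w : ℝ → ℂ} {γ : ℝ → E}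
    (hw : Continuous w) (hγ : Continuous γ) {a b C : ℝ} {s : Set E} {x₀ : E} (hs : s ∈ 𝓝 x₀)
    (hf : ∀ x ∈ s, ∀ t, DifferentiableAt ℂ f (x + γ t))
    (hC : ∀ x ∈ s, ∀ t, ‖fderiv ℂ f (x + γ t)‖ ≤ C) :
    DifferentiableAt ℂ (fun x => ∫ t in a..b, w t • f (x + γ t)) x₀ := by
  borelize E (E →L[ℂ] ℂ)
  have hcont : ∀ x ∈ s, Continuous fun t => w t • f (x + γ t) := fun x hx =>
    hw.smul (continuous_iff_continuousAt.2 fun t =>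
      (hf x hx t).continuousAt.comp (f := fun t => x + γ t) (continuous_const.add hγ).continuousAt)
  refine (intervalIntegral.hasFDerivAt_integral_of_dominated_of_fderiv_le
    (F' := fun x t => w t • fderiv ℂ f (x + γ t)) (bound := fun t => ‖w t‖ * C) hs
    (eventually_of_mem hs fun x hx => (hcont x hx).aestronglyMeasurable)
    ((hcont x₀ (mem_of_mem_nhds hs)).intervalIntegrable _ _)
    ((hw.measurable.smul ((measurable_fderiv ℂ f).comp
      (continuous_const.add hγ).measurable)).aestronglyMeasurable)
    (ae_of_all _ fun t _ x hx => ?_)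
    ((by fun_prop : Continuous fun t => ‖w t‖ * C).intervalIntegrable _ _)
    (ae_of_all _ fun t _ x hx => ?_)).differentiableAt
  · rw [norm_smul]
    exact mul_le_mul_of_nonneg_left (hC x hx t) (norm_nonneg _)
  · exact ((hf x hx t).hasFDerivAt.comp x ((hasFDerivAt_id x).add_const (γ t))).const_smul (w t)

theorem differentiableOn_fderiv_apply {f : E → ℂ} (hU : IsOpen U) (hf : DifferentiableOn ℂ f U)
    (u : E) : DifferentiableOn ℂ (fun x => fderiv ℂ f x u) U := by
  intro x₀ hx₀
  obtain ⟨r, hr, hrU, C, hC⟩ := exists_ball_forall_norm_fderiv_le hU hf hx₀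
  set ρ := r / (2 * (‖u‖ + 1)) with hρ_def
  have hρ : 0 < ρ := by positivity
  have hρu : ρ * ‖u‖ ≤ r / 2 := by
    rw [hρ_def, div_mul_eq_mul_div, div_le_div_iff₀ (by positivity) two_pos]
    nlinarith [norm_nonneg u]
  have hmem : ∀ x ∈ ball x₀ (r / 2), ∀ θ, x + circleMap 0 ρ θ • u ∈ ball x₀ r := fun x hx θ =>
    add_smul_mem_ball hx (by simp [norm_circleMap_zero, abs_of_pos hρ]) hρu
  have hcauchy : (fun x => fderiv ℂ f x u) =ᶠ[𝓝 x₀] fun x => (2 * π * I)⁻¹ •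
      ∫ θ in 0..2 * π, (deriv (circleMap 0 ρ) θ * ((circleMap 0 ρ θ - 0) ^ 2)⁻¹) •
        f (x + circleMap 0 ρ θ • u) := by
    filter_upwards [ball_mem_nhds x₀ (half_pos hr)] with x hx
    rw [fderiv_apply_eq_cderiv hU hf hρ fun ζ hζ => hrU (add_smul_mem_ball hx
      (mem_closedBall_zero_iff.1 hζ) hρu), cderiv, circleIntegral]
    simp only [smul_smul]
  refine (hcauchy.differentiableAt_iff.2 (DifferentiableAt.fun_const_smul ?_ _))
    |>.differentiableWithinAt
  refine differentiableAt_intervalIntegral_smul_comp_add ?_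
    ((continuous_circleMap 0 ρ).smul continuous_const) (ball_mem_nhds x₀ (half_pos hr))
    (fun x hx θ => hf.differentiableAt (hU.mem_nhds (hrU (hmem x hx θ))))
    (fun x hx θ => hC _ (hmem x hx θ))
  simp only [deriv_circleMap, sub_zero]
  exact ((continuous_circleMap 0 ρ).mul continuous_const).mul ((continuous_circleMap 0 ρ).pow 2
    |>.inv₀ fun θ => pow_ne_zero _ (circleMap_ne_center hρ.ne'))

theorem contDiffOn_of_differentiableOn_of_isOpen (hU : IsOpen U) (n : ℕ) :
    ∀ {f : E → ℂ}, DifferentiableOn ℂ f U → ContDiffOn ℂ n f U := by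
  induction n with
  | zero => exact fun hf => contDiffOn_zero.2 hf.continuousOn
  | succ k ih =>
    intro f hf
    push_cast
    refine contDiffOn_succ_of_fderiv_apply hf (by simp) fun u =>
      (ih (differentiableOn_fderiv_apply hU hf u)).congr fun x hx => ?_
    rw [fderivWithin_of_isOpen hU hx]

end Holomorphic

section SecondDerivative

variable {𝕜 E F : Type*} [RCLike 𝕜] [NormedAddCommGroup E] [NormedSpace 𝕜 E]
  [NormedAddCommGroup F] [NormedSpace 𝕜 F] {f : E → F} {x : E}

theorem ContDiffAt.differentiableAt_fderiv (hf : ContDiffAt 𝕜 2 f x) :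
    DifferentiableAt 𝕜 (fderiv 𝕜 f) x :=
  (hf.fderiv_right (m := 1) (by norm_num)).differentiableAt one_ne_zero

theorem ContDiffAt.differentiableAt_fderiv_apply (hf : ContDiffAt 𝕜 2 f x) (v : E) :
    DifferentiableAt 𝕜 (fun y => fderiv 𝕜 f y v) x :=
  hf.differentiableAt_fderiv.clm_apply (differentiableAt_const v)

theorem fderiv_fderiv_apply_comm (hf : ContDiffAt 𝕜 2 f x) (v w : E) :
    fderiv 𝕜 (fun y => fderiv 𝕜 f y v) x w = fderiv 𝕜 (fun y => fderiv 𝕜 f y w) x v := by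
  rw [fderiv_clm_apply hf.differentiableAt_fderiv (differentiableAt_const v),
    fderiv_clm_apply hf.differentiableAt_fderiv (differentiableAt_const w)]
  simpa using hf.isSymmSndFDerivAt (by simp) w v

end SecondDerivative

theorem vecBracket_prodMk_const {A B : Type*} [NormedAddCommGroup A] [NormedSpace ℂ A]
    [NormedAddCommGroup B] [NormedSpace ℂ B] (a b : A) {F G : A × B → B} {x : A × B}
    (hF : DifferentiableAt ℂ F x) (hG : DifferentiableAt ℂ G x) :
    vecBracket (fun y => (a, F y)) (fun y => (b, G y)) x
      = (0, fderiv ℂ G x (a, F x) - fderiv ℂ F x (b, G x)) := by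
  rw [vecBracket, (differentiableAt_const a).fderiv_prodMk hF,
    (differentiableAt_const b).fderiv_prodMk hG]
  simp

section Darboux

variable {n : ℕ}

theorem fderiv_apply_single_add_smul_single (g : (Fin n → ℂ) × (Fin n → ℂ) → ℂ)
    (x : (Fin n → ℂ) × (Fin n → ℂ)) (a : Fin n → ℂ) (c : ℂ) (i : Fin n) :
    fderiv ℂ g x (Pi.single i 1, a + c • Pi.single i 1)
      = dz g i x + ∑ s, a s * dθ g s x + c * dθ g i x := by
  set L := fderiv ℂ g x
  have hθ : L (0, a) = ∑ s, a s * L (0, Pi.single s 1) := by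
    change (L.comp (.inr ℂ _ _)) a = _
    conv_lhs => rw [← Finset.univ_sum_single a]
    rw [map_sum]
    refine Finset.sum_congr rfl fun s _ => ?_
    rw [← mul_one (a s), ← smul_eq_mul, Pi.single_smul', map_smul, smul_eq_mul, smul_eq_mul,
      mul_one]
    rfl
  rw [show ((Pi.single i 1, a + c • Pi.single i 1) : (Fin n → ℂ) × (Fin n → ℂ))
      = (Pi.single i 1, 0) + (0, a) + c • (0, Pi.single i 1) by simp,
    map_add, map_add, map_smul, hθ, smul_eq_mul]
  rfl

theorem sum_mul_sub_sum_mul_of_transpose_eq_neg {η : Matrix (Fin n) (Fin n) ℂ}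
    (hskew : η.transpose = -η) (α β A B : Fin n → ℂ) :
    ∑ s, (∑ r, η r s * α r) * B s - ∑ s, (∑ r, η r s * β r) * A s
      = ∑ r, ∑ s, η r s * (A r * β s + α r * B s) := by
  have hη : ∀ r s, η s r = -η r s := fun r s => by
    simpa using congrFun (congrFun hskew r) s
  have hA : ∑ s, (∑ r, η r s * β r) * A s = -∑ r, ∑ s, η r s * (A r * β s) := by
    simp only [Finset.sum_mul, ← Finset.sum_neg_distrib]
    refine Finset.sum_congr rfl fun r _ => Finset.sum_congr rfl fun s _ => ?_
    rw [hη]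
    ring
  have hB : ∑ s, (∑ r, η r s * α r) * B s = ∑ r, ∑ s, η r s * (α r * B s) := by
    simp only [Finset.sum_mul]
    rw [Finset.sum_comm]
    simp only [mul_assoc]
  simp only [hA, hB, mul_add, Finset.sum_add_distrib]
  ring

variable {x : (Fin n → ℂ) × (Fin n → ℂ)}

theorem dθ_dθ_comm {f : (Fin n → ℂ) × (Fin n → ℂ) → ℂ} (hf : ContDiffAt ℂ 2 f x) (p k : Fin n) :
    dθ (dθ f p) k x = dθ (dθ f k) p x :=
  fderiv_fderiv_apply_comm hf _ _

theorem dz_dθ_comm {f : (Fin n → ℂ) × (Fin n → ℂ) → ℂ} (hf : ContDiffAt ℂ 2 f x) (p k : Fin n) :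
    dz (dθ f p) k x = dθ (dz f k) p x :=
  fderiv_fderiv_apply_comm hf _ _

variable (η : Matrix (Fin n) (Fin n) ℂ) (W : Fin n → (Fin n → ℂ) × (Fin n → ℂ) → ℂ)

noncomputable def pencilField (ε : ℂ) (i : Fin n) (y : (Fin n → ℂ) × (Fin n → ℂ)) :
    (Fin n → ℂ) × (Fin n → ℂ) :=
  (Pi.single i 1, (fun q => ∑ p, η p q * dθ (W i) p y) + ε⁻¹ • Pi.single i 1)

noncomputable def curlθ (i j : Fin n) (y : (Fin n → ℂ) × (Fin n → ℂ)) : ℂ :=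
  dθ (W i) j y - dθ (W j) i y

noncomputable def curlz (i j : Fin n) (y : (Fin n → ℂ) × (Fin n → ℂ)) : ℂ :=
  dz (W i) j y - dz (W j) i y - ∑ p, ∑ q, η p q * dθ (W i) p y * dθ (W j) q y

variable {η W} {i j : Fin n}

theorem dθ_curlθ (hi : ContDiffAt ℂ 2 (W i) x) (hj : ContDiffAt ℂ 2 (W j) x) (k : Fin n) :
    dθ (curlθ W i j) k x = dθ (dθ (W i) j) k x - dθ (dθ (W j) i) k x := by
  unfold curlθ
  rw [dθ, fderiv_fun_sub (f := dθ (W i) j) (g := dθ (W j) i) (hi.differentiableAt_fderiv_apply _)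
    (hj.differentiableAt_fderiv_apply _)]
  rfl

theorem dθ_curlz (hi : ContDiffAt ℂ 2 (W i) x) (hj : ContDiffAt ℂ 2 (W j) x) (k : Fin n) :
    dθ (curlz η W i j) k x = dθ (dz (W i) j) k x - dθ (dz (W j) i) k x
      - ∑ p, ∑ q, η p q * (dθ (dθ (W i) p) k x * dθ (W j) q x
        + dθ (W i) p x * dθ (dθ (W j) q) k x) := by
  have hdi := hi.differentiableAt_fderiv_apply
  have hdj := hj.differentiableAt_fderiv_apply
  unfold curlz dθ dz
  rw [fderiv_fun_sub (by fun_prop) (by fun_prop), fderiv_fun_sub (hdi _) (hdj _),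
    fderiv_fun_sum (by fun_prop)]
  simp only [sub_apply, sum_apply]
  congr 1
  refine Finset.sum_congr rfl fun p _ => ?_
  rw [fderiv_fun_sum (by fun_prop)]
  simp only [sum_apply]
  refine Finset.sum_congr rfl fun q _ => ?_
  rw [fderiv_fun_mul (by fun_prop) (hdj _), fderiv_const_mul (hdi _)]
  simp only [add_apply, smul_apply, smul_eq_mul]
  ring

theorem fderiv_sum_mul_dθ_add_apply {l : Fin n} (hl : ContDiffAt ℂ 2 (W l) x) (c : Fin n → ℂ)
    (v : (Fin n → ℂ) × (Fin n → ℂ)) :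
    fderiv ℂ (fun y => (fun q => ∑ p, η p q * dθ (W l) p y) + c) x v
      = fun q => ∑ p, η p q * fderiv ℂ (dθ (W l) p) x v := by
  have hθ : HasFDerivAt (fun y q => ∑ p, η p q * dθ (W l) p y)
      (ContinuousLinearMap.pi fun q => ∑ p, η p q • fderiv ℂ (dθ (W l) p) x) x :=
    hasFDerivAt_pi.2 fun q => HasFDerivAt.fun_sum fun p _ =>
      (hl.differentiableAt_fderiv_apply _).hasFDerivAt.const_mul (η p q)
  rw [(hθ.add_const c).fderiv]
  ext q
  simp

theorem fderiv_dθ_pencilField_sub (hskew : η.transpose = -η) (hi : ContDiffAt ℂ 2 (W i) x)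
    (hj : ContDiffAt ℂ 2 (W j) x) (ε : ℂ) (p : Fin n) :
    fderiv ℂ (dθ (W j) p) x (pencilField η W ε i x)
        - fderiv ℂ (dθ (W i) p) x (pencilField η W ε j x)
      = -(dθ (curlz η W i j) p x + ε⁻¹ * dθ (curlθ W i j) p x) := by
  rw [pencilField, pencilField, fderiv_apply_single_add_smul_single,
    fderiv_apply_single_add_smul_single, dθ_curlz hi hj, dθ_curlθ hi hj, dz_dθ_comm hi,
    dz_dθ_comm hj]
  simp only [dθ_dθ_comm hi p, dθ_dθ_comm hj p]
  linear_combination sum_mul_sub_sum_mul_of_transpose_eq_neg hskew (dθ (W i) · x) (dθ (W j) · x)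
    (fun r => dθ (dθ (W i) r) p x) (fun r => dθ (dθ (W j) r) p x)

theorem vecBracket_pencilField (hskew : η.transpose = -η) (hi : ContDiffAt ℂ 2 (W i) x)
    (hj : ContDiffAt ℂ 2 (W j) x) (ε : ℂ) :
    vecBracket (pencilField η W ε i) (pencilField η W ε j) x
      = (0, -((fun k => dθ (curlz η W i j) k x + ε⁻¹ * dθ (curlθ W i j) k x) ᵥ* η)) := by
  have hdiff : ∀ l, ContDiffAt ℂ 2 (W l) x → DifferentiableAt ℂ
      (fun y => (fun q => ∑ p, η p q * dθ (W l) p y) + ε⁻¹ • Pi.single l 1) x := fun l hl =>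
    (differentiableAt_pi.2 fun q => DifferentiableAt.fun_sum fun p _ =>
      (hl.differentiableAt_fderiv_apply _).const_mul (η p q)).add_const _
  unfold pencilField
  rw [vecBracket_prodMk_const _ _ (hdiff i hi) (hdiff j hj),
    fderiv_sum_mul_dθ_add_apply hj, fderiv_sum_mul_dθ_add_apply hi]
  ext q
  · rfl
  simp only [Pi.sub_apply, ← Finset.sum_sub_distrib, ← mul_sub, Matrix.vecMul, dotProduct,
    Pi.neg_apply, ← Finset.sum_neg_distrib]
  refine Finset.sum_congr rfl fun p _ => ?_
  rw [← pencilField, ← pencilField, fderiv_dθ_pencilField_sub hskew hi hj]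
  ring

end Darboux

theorem preJoyce_flatness_iff_general (n : ℕ) (η : Matrix (Fin n) (Fin n) ℂ)
    (hη : IsUnit η) (hskew : η.transpose = -η)
    (U : Set ((Fin n → ℂ) × (Fin n → ℂ))) (hU : IsOpen U)
    (W : Fin n → (Fin n → ℂ) × (Fin n → ℂ) → ℂ)
    (hW : ∀ i, DifferentiableOn ℂ (W i) U)
    (v h : Fin n → ((Fin n → ℂ) × (Fin n → ℂ)) → (Fin n → ℂ) × (Fin n → ℂ))
    (hv : ∀ i x, v i x = (0, Pi.single i 1))
    (hh : ∀ i x, h i x = (Pi.single i 1, fun q => ∑ p, η p q * dθ (W i) p x)) :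
    (∀ ε : ℂ, ε ≠ 0 → ∀ i j, ∀ x ∈ U,
        vecBracket (fun y => h i y + ε⁻¹ • v i y) (fun y => h j y + ε⁻¹ • v j y) x = 0) ↔
      (∀ i j k, ∀ x ∈ U,
        dθ (fun y => dθ (W i) j y - dθ (W j) i y) k x = 0 ∧
        dθ (fun y => dz (W i) j y - dz (W j) i y
            - ∑ p, ∑ q, η p q * dθ (W i) p y * dθ (W j) q y) k x = 0) := by
  have hfield : ∀ ε l, (fun y => h l y + ε⁻¹ • v l y) = pencilField η W ε l := fun ε l => by
    funext y
    simp [pencilField, hh, hv]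
  have hbracket : ∀ i j, ∀ x ∈ U, ∀ ε,
      vecBracket (pencilField η W ε i) (pencilField η W ε j) x = 0
        ↔ ∀ k, dθ (curlz η W i j) k x + ε⁻¹ * dθ (curlθ W i j) k x = 0 := fun i j x hx ε => by
    have hW2 : ∀ l, ContDiffAt ℂ 2 (W l) x := fun l =>
      (contDiffOn_of_differentiableOn_of_isOpen hU 2 (hW l)).contDiffAt (hU.mem_nhds hx)
    rw [vecBracket_pencilField hskew (hW2 i) (hW2 j), Prod.mk_eq_zero, neg_eq_zero,
      (Matrix.vecMul_injective_of_isUnit hη).eq_iff' (Matrix.zero_vecMul η)]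
    simp [funext_iff]
  simp only [hfield]
  constructor
  · intro hflat i j k x hx
    have := forall_add_inv_mul_eq_zero_iff.1 fun ε hε =>
      (hbracket i j x hx ε).1 (hflat ε hε i j x hx) k
    exact ⟨this.2, this.1⟩
  · intro hcurl ε hε i j x hx
    exact (hbracket i j x hx ε).2 fun k =>
      forall_add_inv_mul_eq_zero_iff.2 ⟨(hcurl i j k x hx).2, (hcurl i j k x hx).1⟩ ε hε

/-- Flatness of the pencil of connections `h_ε = h + ε⁻¹v` of a pre-Joyce structure,
written in Darboux coordinates, is equivalent to the equations (2.3) of the paper: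
the vector fields `h_i + ε⁻¹v_i` pairwise commute for all `ε ∈ ℂ∖{0}` iff the stated
θ-derivatives vanish. -/
theorem preJoyce_flatness_iff (n : ℕ) (hn : 1 ≤ n) (η : Matrix (Fin n) (Fin n) ℂ)
    (hη : IsUnit η) (hskew : η.transpose = -η)
    (U : Set ((Fin n → ℂ) × (Fin n → ℂ))) (hU : IsOpen U)
    (W : Fin n → (Fin n → ℂ) × (Fin n → ℂ) → ℂ)
    (hW : ∀ i, DifferentiableOn ℂ (W i) U)
    (v h : Fin n → ((Fin n → ℂ) × (Fin n → ℂ)) → (Fin n → ℂ) × (Fin n → ℂ))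
    (hv : ∀ i x, v i x = (0, Pi.single i 1))
    (hh : ∀ i x, h i x = (Pi.single i 1, fun q => ∑ p, η p q * dθ (W i) p x)) :
    (∀ ε : ℂ, ε ≠ 0 → ∀ i j, ∀ x ∈ U,
        vecBracket (fun y => h i y + ε⁻¹ • v i y) (fun y => h j y + ε⁻¹ • v j y) x = 0) ↔
      (∀ i j k, ∀ x ∈ U,
        dθ (fun y => dθ (W i) j y - dθ (W j) i y) k x = 0 ∧
        dθ (fun y => dz (W i) j y - dz (W j) i y
            - ∑ p, ∑ q, η p q * dθ (W i) p y * dθ (W j) q y) k x = 0) :=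
  preJoyce_flatness_iff_general n η hη hskew U hU W hW v h hv hh
end

section
/- Let U ⊆ ℂ⁴ be open with coordinates (a,b,q,r), and let p : U → ℂ be a holomorphic function with p(x) ≠ 0 and p² = q³ + aq + b at every point of U. Define vector fields on U by X_∞ = ∂/∂a − (r/p)·∂/∂q − ((r²(3q²+a) − qpr)/(2p³))·∂/∂r and Y_∞ = ∂/∂b + (r/(2p²))·∂/∂r. Then the Lie bracket [X_∞, Y_∞] vanishes identically on U. -/
/-! Coordinates on `ℂ⁴` are `(a, b, q, r) = (x.1, x.2.1, x.2.2.1, x.2.2.2)`; write `s = r / p`.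
Differentiating `p² = q³ + aq + b` gives `2p dp = q da + db + (3q² + a) dq`, hence
`X_∞ r = s · X_∞ p` and `Y_∞ r = s · Y_∞ p`: the function `s` is a first integral of both fields
(in the coordinates `(a, b, q, s)` they are `∂_a - s ∂_q` and `∂_b`). The `q`-component of the
bracket is `Y_∞ s = 0`. For the `r`-component write `X_∞ r = s m w` and `Y_∞ r = s w` with
`w = 1/(2p)` and `m = q - (3q² + a) s`; as `Y_∞` kills `s`, `a` and `q`, the component reduces to
`s (X_∞ w - m Y_∞ w)`, which vanishes because `2p X_∞ p = m` and `2p Y_∞ p = 1`. -/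

open Filter Topology

section Scalar

variable {E : Type*} [NormedAddCommGroup E] [NormedSpace ℂ E] {f g : E → ℂ} {x : E}

theorem fderiv_mul_apply (hf : DifferentiableAt ℂ f x) (hg : DifferentiableAt ℂ g x) (v : E) :
    fderiv ℂ (fun y => f y * g y) x v = f x * fderiv ℂ g x v + g x * fderiv ℂ f x v := by
  simp only [fderiv_fun_mul hf hg, add_apply, smul_apply, smul_eq_mul]

theorem fderiv_inv_apply (hg : DifferentiableAt ℂ g x) (hgx : g x ≠ 0) (v : E) :
    fderiv ℂ (fun y => (g y)⁻¹) x v = -(g x)⁻¹ ^ 2 * fderiv ℂ g x v := by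
  have h : HasFDerivAt (fun y => (g y)⁻¹) _ x :=
    (hasDerivAt_inv hgx).comp_hasFDerivAt x hg.hasFDerivAt
  simp [h.fderiv, inv_pow]

theorem fderiv_div_apply_eq_zero (hf : DifferentiableAt ℂ f x) (hg : DifferentiableAt ℂ g x)
    (hgx : g x ≠ 0) {v : E} (hv : fderiv ℂ f x v = f x / g x * fderiv ℂ g x v) :
    fderiv ℂ (fun y => f y / g y) x v = 0 := by
  simp only [div_eq_mul_inv]
  rw [fderiv_mul_apply (g := fun y => (g y)⁻¹) hf (hg.inv hgx), fderiv_inv_apply hg hgx, hv]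
  field_simp
  ring

theorem two_mul_fderiv_apply_of_sq_eventuallyEq (hf : DifferentiableAt ℂ f x)
    (hfg : (fun y => f y ^ 2) =ᶠ[𝓝 x] g) (v : E) :
    2 * f x * fderiv ℂ f x v = fderiv ℂ g x v := by
  rw [← hfg.fderiv_eq, fderiv_fun_pow 2 hf]
  simp [mul_assoc]

end Scalar

theorem vecBracket_eq_fderiv_coord {X Y : ℂ × ℂ × ℂ × ℂ → ℂ × ℂ × ℂ × ℂ}
    {x : ℂ × ℂ × ℂ × ℂ} (hX : DifferentiableAt ℂ X x) (hY : DifferentiableAt ℂ Y x) :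
    vecBracket X Y x =
      (fderiv ℂ (fun y => (Y y).1) x (X x) - fderiv ℂ (fun y => (X y).1) x (Y x),
        fderiv ℂ (fun y => (Y y).2.1) x (X x) - fderiv ℂ (fun y => (X y).2.1) x (Y x),
        fderiv ℂ (fun y => (Y y).2.2.1) x (X x) - fderiv ℂ (fun y => (X y).2.2.1) x (Y x),
        fderiv ℂ (fun y => (Y y).2.2.2) x (X x) - fderiv ℂ (fun y => (X y).2.2.2) x (Y x)) := by
  simp (disch := fun_prop) only [vecBracket, fderiv.fst, fderiv.snd,
    ContinuousLinearMap.comp_apply, ContinuousLinearMap.coe_fst', ContinuousLinearMap.coe_snd']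
  rfl

section A2

variable {p : ℂ × ℂ × ℂ × ℂ → ℂ} {x : ℂ × ℂ × ℂ × ℂ}

noncomputable def xInfty (p : ℂ × ℂ × ℂ × ℂ → ℂ) (y : ℂ × ℂ × ℂ × ℂ) : ℂ × ℂ × ℂ × ℂ :=
  (1, 0, -(y.2.2.2 / p y),
    -((y.2.2.2 ^ 2 * (3 * y.2.2.1 ^ 2 + y.1) - y.2.2.1 * p y * y.2.2.2) / (2 * p y ^ 3)))

noncomputable def yInfty (p : ℂ × ℂ × ℂ × ℂ → ℂ) (y : ℂ × ℂ × ℂ × ℂ) : ℂ × ℂ × ℂ × ℂ :=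
  (0, 1, 0, y.2.2.2 / (2 * p y ^ 2))

theorem two_mul_fderiv_apply_of_sq_eq_cubic (hp : DifferentiableAt ℂ p x)
    (hsq : (fun y => p y ^ 2) =ᶠ[𝓝 x] fun y => y.2.2.1 ^ 3 + y.1 * y.2.2.1 + y.2.1)
    (v : ℂ × ℂ × ℂ × ℂ) :
    2 * p x * fderiv ℂ p x v = x.2.2.1 * v.1 + v.2.1 + (3 * x.2.2.1 ^ 2 + x.1) * v.2.2.1 := by
  rw [two_mul_fderiv_apply_of_sq_eventuallyEq hp hsq]
  simp (disch := fun_prop) only [fderiv_fun_add, fderiv_fun_pow, fderiv_fun_mul, fderiv.fst,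
    fderiv.snd, fderiv_fun_id, Nat.add_one_sub_one, nsmul_eq_mul, Nat.cast_ofNat, add_apply,
    smul_apply, smul_eq_mul, ContinuousLinearMap.comp_id, ContinuousLinearMap.comp_apply,
    ContinuousLinearMap.coe_fst', ContinuousLinearMap.coe_snd']
  ring

theorem fderiv_r_div_apply_eq_zero (hp : DifferentiableAt ℂ p x) (hpx : p x ≠ 0)
    {v : ℂ × ℂ × ℂ × ℂ} (hv : v.2.2.2 * p x = x.2.2.2 * fderiv ℂ p x v) :
    fderiv ℂ (fun y => y.2.2.2 / p y) x v = 0 := by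
  refine fderiv_div_apply_eq_zero (by fun_prop) hp hpx ?_
  simp (disch := fun_prop) only [fderiv.snd, fderiv_fun_id, ContinuousLinearMap.comp_id,
    ContinuousLinearMap.comp_apply, ContinuousLinearMap.coe_snd']
  field_simp
  exact hv

theorem fderiv_r_div_apply_xInfty (hp : DifferentiableAt ℂ p x) (hpx : p x ≠ 0)
    (hsq : (fun y => p y ^ 2) =ᶠ[𝓝 x] fun y => y.2.2.1 ^ 3 + y.1 * y.2.2.1 + y.2.1) :
    fderiv ℂ (fun y => y.2.2.2 / p y) x (xInfty p x) = 0 := by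
  refine fderiv_r_div_apply_eq_zero hp hpx ?_
  have hX := two_mul_fderiv_apply_of_sq_eq_cubic hp hsq (xInfty p x)
  generalize fderiv ℂ p x (xInfty p x) = D at hX ⊢
  simp only [xInfty] at hX ⊢
  field_simp at hX ⊢
  linear_combination -x.2.2.2 * hX

theorem fderiv_r_div_apply_yInfty (hp : DifferentiableAt ℂ p x) (hpx : p x ≠ 0)
    (hsq : (fun y => p y ^ 2) =ᶠ[𝓝 x] fun y => y.2.2.1 ^ 3 + y.1 * y.2.2.1 + y.2.1) :
    fderiv ℂ (fun y => y.2.2.2 / p y) x (yInfty p x) = 0 := by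
  refine fderiv_r_div_apply_eq_zero hp hpx ?_
  have hY := two_mul_fderiv_apply_of_sq_eq_cubic hp hsq (yInfty p x)
  generalize fderiv ℂ p x (yInfty p x) = D at hY ⊢
  simp only [yInfty] at hY ⊢
  field_simp at hY ⊢
  linear_combination -x.2.2.2 * hY

theorem fderiv_yInfty_r_apply_xInfty (hp : DifferentiableAt ℂ p x) (hpx : p x ≠ 0)
    (hsq : (fun y => p y ^ 2) =ᶠ[𝓝 x] fun y => y.2.2.1 ^ 3 + y.1 * y.2.2.1 + y.2.1) :
    fderiv ℂ (fun y => (yInfty p y).2.2.2) x (xInfty p x) =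
      fderiv ℂ (fun y => (xInfty p y).2.2.2) x (yInfty p x) := by
  set s : ℂ × ℂ × ℂ × ℂ → ℂ := fun y => y.2.2.2 / p y
  set w : ℂ × ℂ × ℂ × ℂ → ℂ := fun y => (2 * p y)⁻¹
  set m : ℂ × ℂ × ℂ × ℂ → ℂ := fun y => y.2.2.1 - (3 * y.2.2.1 ^ 2 + y.1) * s y
  have h2p : 2 * p x ≠ 0 := mul_ne_zero two_ne_zero hpx
  have hs : DifferentiableAt ℂ s x := by fun_prop (disch := assumption)
  have hw : DifferentiableAt ℂ w x := by fun_prop (disch := assumption)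
  have hsX : fderiv ℂ s x (xInfty p x) = 0 := fderiv_r_div_apply_xInfty hp hpx hsq
  have hsY : fderiv ℂ s x (yInfty p x) = 0 := fderiv_r_div_apply_yInfty hp hpx hsq
  have hYr : (fun y => (yInfty p y).2.2.2) = fun y => s y * w y := by
    funext y
    simp only [yInfty, s, w]
    ring
  have hXr : (fun y => (xInfty p y).2.2.2) =ᶠ[𝓝 x] fun y => s y * (m y * w y) := by
    filter_upwards [hp.continuousAt.eventually_ne hpx] with y hy
    simp only [xInfty, s, m, w]
    field_simp
    ring
  have hDw (v) : fderiv ℂ w x v = -(2 * p x)⁻¹ ^ 2 * (2 * fderiv ℂ p x v) := by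
    rw [fderiv_inv_apply (g := fun y => 2 * p y) (by fun_prop) h2p]
    simp [fderiv_const_mul hp]
  have hDm : fderiv ℂ m x (yInfty p x) = 0 := by
    simp only [yInfty] at hsY
    simp (disch := fun_prop) [m, fderiv_fun_sub, fderiv_fun_mul, fderiv_fun_add, fderiv_fun_pow,
      fderiv.fst, fderiv.snd, yInfty, hsY]
  rw [hYr, hXr.fderiv_eq, fderiv_mul_apply hs hw,
    fderiv_mul_apply (g := fun y => m y * w y) hs (by fun_prop), fderiv_mul_apply (by fun_prop) hw,
    hsX, hsY, hDm, hDw, hDw]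
  have hDpX := two_mul_fderiv_apply_of_sq_eq_cubic hp hsq (xInfty p x)
  have hDpY := two_mul_fderiv_apply_of_sq_eq_cubic hp hsq (yInfty p x)
  generalize fderiv ℂ p x (xInfty p x) = DX at hDpX ⊢
  generalize fderiv ℂ p x (yInfty p x) = DY at hDpY ⊢
  simp only [xInfty, yInfty] at hDpX hDpY
  simp only [s, m, w]
  field_simp at hDpX hDpY ⊢
  linear_combination (-x.2.2.2 * DY) * hDpX + (p x * x.2.2.2 * DX) * hDpY

theorem vecBracket_xInfty_yInfty (hp : DifferentiableAt ℂ p x) (hpx : p x ≠ 0)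
    (hsq : (fun y => p y ^ 2) =ᶠ[𝓝 x] fun y => y.2.2.1 ^ 3 + y.1 * y.2.2.1 + y.2.1) :
    vecBracket (xInfty p) (yInfty p) x = 0 := by
  have hX : DifferentiableAt ℂ (xInfty p) x := by
    unfold xInfty
    fun_prop (disch := simpa)
  have hY : DifferentiableAt ℂ (yInfty p) x := by
    unfold yInfty
    fun_prop (disch := simpa)
  have hsY := fderiv_r_div_apply_yInfty hp hpx hsq
  rw [vecBracket_eq_fderiv_coord hX hY, fderiv_yInfty_r_apply_xInfty hp hpx hsq, sub_self]
  simp only [yInfty] at hsY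
  simp [xInfty, yInfty, fderiv_fun_neg, hsY]

end A2

/-- The `ε → ∞` limits `X_∞`, `Y_∞` of the isomonodromy flows of the deformed cubic
oscillator defining the A₂-quiver Joyce structure commute.  Coordinates on
`U ⊆ ℂ⁴` are `(a,b,q,r) = (x.1, x.2.1, x.2.2.1, x.2.2.2)`, and `p` is holomorphic,
nonvanishing, with `p² = q³ + aq + b` on `U`. -/
theorem A2_infinity_flows_commute (U : Set (ℂ × ℂ × ℂ × ℂ)) (hU : IsOpen U)
    (p : ℂ × ℂ × ℂ × ℂ → ℂ) (hp : DifferentiableOn ℂ p U)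
    (hp0 : ∀ x ∈ U, p x ≠ 0)
    (hpsq : ∀ x ∈ U, p x ^ 2 = x.2.2.1 ^ 3 + x.1 * x.2.2.1 + x.2.1) :
    ∀ x ∈ U,
      vecBracket
        (fun y => (1, 0, -(y.2.2.2 / p y),
          -((y.2.2.2 ^ 2 * (3 * y.2.2.1 ^ 2 + y.1) - y.2.2.1 * p y * y.2.2.2) /
              (2 * p y ^ 3))))
        (fun y => (0, 1, 0, y.2.2.2 / (2 * p y ^ 2))) x = 0 := by
  intro x hx
  have hUx : U ∈ 𝓝 x := hU.mem_nhds hx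
  exact vecBracket_xInfty_yInfty ((hp x hx).differentiableAt hUx) (hp0 x hx)
    (eventually_of_mem hUx hpsq)
end

section
/- Let U ⊆ ℂ⁴ be open with coordinates (a,b,q,r), and let p : U → ℂ be a holomorphic function with p(x) ≠ 0 and p² = q³ + aq + b at every point of U. Define vector fields on U by X_∞ = ∂/∂a − (r/p)·∂/∂q − ((r²(3q²+a) − qpr)/(2p³))·∂/∂r and Y_∞ = ∂/∂b + (r/(2p²))·∂/∂r, and define φ₁ = q + a·r/p and φ₂ = r/(2p). Then X_∞(φ₁) = X_∞(φ₂) = Y_∞(φ₁) = Y_∞(φ₂) = 0 identically on U, where a vector field Z acts on a function f by Z(f)(x) = Df(x)(Z(x)). -/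
/-!
In the coordinates `(a, b, q, r) = (y.1, y.2.1, y.2.2.1, y.2.2.2)` write `φ₂ = r/(2p)`; then
`φ₁ = q + 2aφ₂`, so `X_∞(φ₁) = X_∞(q) + 2φ₂ + 2a X_∞(φ₂) = 2a X_∞(φ₂)` and
`Y_∞(φ₁) = 2a Y_∞(φ₂)`: everything reduces to `X_∞(φ₂) = Y_∞(φ₂) = 0`. Both follow from the
quotient rule once the derivative of `p` is eliminated by differentiating `p² = q³ + aq + b`,
i.e. `2p Dp(v) = (3q² + a) v_q + q v_a + v_b`.
-/

open Filter Topology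

theorem two_mul_mul_fderiv_apply_of_sq_eventuallyEq {𝕜 E : Type*} [NontriviallyNormedField 𝕜]
    [NormedAddCommGroup E] [NormedSpace 𝕜 E] {p g : E → 𝕜} {x : E}
    (hp : DifferentiableAt 𝕜 p x) (hg : (fun y => p y ^ 2) =ᶠ[𝓝 x] g) (v : E) :
    2 * p x * fderiv 𝕜 p x v = fderiv 𝕜 g x v := by
  rw [← hg.fderiv_eq, fderiv_fun_pow 2 hp]
  simp [mul_assoc]

namespace A2

variable {p : ℂ × ℂ × ℂ × ℂ → ℂ} {x : ℂ × ℂ × ℂ × ℂ}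

noncomputable def twistorCoord₁ (p : ℂ × ℂ × ℂ × ℂ → ℂ) (y : ℂ × ℂ × ℂ × ℂ) : ℂ :=
  y.2.2.1 + y.1 * y.2.2.2 / p y

noncomputable def twistorCoord₂ (p : ℂ × ℂ × ℂ × ℂ → ℂ) (y : ℂ × ℂ × ℂ × ℂ) : ℂ :=
  y.2.2.2 / (2 * p y)

theorem twistorCoord₁_eq (p : ℂ × ℂ × ℂ × ℂ → ℂ) :
    twistorCoord₁ p = fun y => y.2.2.1 + 2 * y.1 * twistorCoord₂ p y := by
  funext y
  simp only [twistorCoord₁, twistorCoord₂]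
  ring

theorem fderiv_cubic_apply (x v : ℂ × ℂ × ℂ × ℂ) :
    fderiv ℂ (fun y : ℂ × ℂ × ℂ × ℂ => y.2.2.1 ^ 3 + y.1 * y.2.2.1 + y.2.1) x v =
      (3 * x.2.2.1 ^ 2 + x.1) * v.2.2.1 + x.2.2.1 * v.1 + v.2.1 := by
  have ha : HasFDerivAt (fun y : ℂ × ℂ × ℂ × ℂ => y.1) _ x := (hasFDerivAt_id (𝕜 := ℂ) x).fst
  have hb : HasFDerivAt (fun y : ℂ × ℂ × ℂ × ℂ => y.2.1) _ x :=
    (hasFDerivAt_id (𝕜 := ℂ) x).snd.fst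
  have hq : HasFDerivAt (fun y : ℂ × ℂ × ℂ × ℂ => y.2.2.1) _ x :=
    (hasFDerivAt_id (𝕜 := ℂ) x).snd.snd.fst
  rw [(((hq.pow 3).fun_add (ha.fun_mul hq)).fun_add hb).fderiv]
  simp only [Nat.add_one_sub_one, nsmul_eq_mul, Nat.cast_ofNat, ContinuousLinearMap.comp_id,
    add_apply, smul_apply,
    ContinuousLinearMap.comp_apply, ContinuousLinearMap.coe_snd', ContinuousLinearMap.coe_fst',
    smul_eq_mul, add_left_inj]
  ring

theorem fderiv_apply_of_sq_eq_cubic {U : Set (ℂ × ℂ × ℂ × ℂ)} (hU : U ∈ 𝓝 x)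
    (hp : DifferentiableAt ℂ p x) (hp0 : p x ≠ 0)
    (hpsq : ∀ y ∈ U, p y ^ 2 = y.2.2.1 ^ 3 + y.1 * y.2.2.1 + y.2.1) (v : ℂ × ℂ × ℂ × ℂ) :
    fderiv ℂ p x v =
      ((3 * x.2.2.1 ^ 2 + x.1) * v.2.2.1 + x.2.2.1 * v.1 + v.2.1) / (2 * p x) := by
  rw [← fderiv_cubic_apply, ← two_mul_mul_fderiv_apply_of_sq_eventuallyEq hp
    (eventually_of_mem hU hpsq)]
  field_simp

theorem fderiv_twistorCoord₂_apply (hp : DifferentiableAt ℂ p x) (hp0 : p x ≠ 0)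
    (v : ℂ × ℂ × ℂ × ℂ) :
    fderiv ℂ (twistorCoord₂ p) x v =
      (v.2.2.2 * p x - x.2.2.2 * fderiv ℂ p x v) / (2 * p x ^ 2) := by
  have h : HasFDerivAt (fun y : ℂ × ℂ × ℂ × ℂ => y.2.2.2 * (2 * p y)⁻¹) _ x :=
    (hasFDerivAt_id (𝕜 := ℂ) x).snd.snd.snd.fun_mul
      ((hasFDerivAt_inv (mul_ne_zero two_ne_zero hp0)).comp x (hp.hasFDerivAt.const_mul 2))
  have e : twistorCoord₂ p = fun y => y.2.2.2 * (2 * p y)⁻¹ := funext fun y => div_eq_mul_inv _ _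
  rw [e, h.fderiv]
  simp only [id_eq, ContinuousLinearMap.comp_smulₛₗ, RingHom.id_apply, ContinuousLinearMap.comp_id,
    add_apply, smul_apply,
    ContinuousLinearMap.comp_apply, ContinuousLinearMap.toSpanSingleton_apply,
    ContinuousLinearMap.coe_snd', smul_eq_mul]
  field_simp
  ring

theorem fderiv_twistorCoord₁_apply (hp : DifferentiableAt ℂ p x) (hp0 : p x ≠ 0)
    (v : ℂ × ℂ × ℂ × ℂ) :
    fderiv ℂ (twistorCoord₁ p) x v =
      v.2.2.1 + 2 * (v.1 * twistorCoord₂ p x + x.1 * fderiv ℂ (twistorCoord₂ p) x v) := by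
  have h₂ : DifferentiableAt ℂ (twistorCoord₂ p) x := by
    unfold twistorCoord₂
    fun_prop (disch := exact mul_ne_zero two_ne_zero hp0)
  have h : HasFDerivAt (fun y : ℂ × ℂ × ℂ × ℂ => y.2.2.1 + 2 * y.1 * twistorCoord₂ p y) _ x :=
    (hasFDerivAt_id (𝕜 := ℂ) x).snd.snd.fst.fun_add
      (((hasFDerivAt_id (𝕜 := ℂ) x).fst.const_mul 2).fun_mul h₂.hasFDerivAt)
  rw [twistorCoord₁_eq, h.fderiv]
  simp only [ContinuousLinearMap.comp_id, id_eq, add_apply,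
    ContinuousLinearMap.comp_apply, ContinuousLinearMap.coe_snd', ContinuousLinearMap.coe_fst',
    smul_apply, smul_eq_mul, add_right_inj]
  ring

end A2

/-- The functions `φ₁ = q + ar/p` and `φ₂ = r/(2p)` are constant along the
`ε → ∞` isomonodromy flows `X_∞`, `Y_∞` of the deformed cubic oscillator of the
A₂-quiver Joyce structure: a vector field `Z` acts on a function `f` by
`Z(f)(x) = Df(x)(Z(x))`, and all four derivatives `X_∞(φᵢ)`, `Y_∞(φᵢ)` vanish.
Coordinates on `U ⊆ ℂ⁴` are `(a,b,q,r) = (x.1, x.2.1, x.2.2.1, x.2.2.2)`, and `p` is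
holomorphic, nonvanishing, with `p² = q³ + aq + b` on `U`. -/
theorem A2_twistor_coordinates_invariant (U : Set (ℂ × ℂ × ℂ × ℂ)) (hU : IsOpen U)
    (p : ℂ × ℂ × ℂ × ℂ → ℂ) (hp : DifferentiableOn ℂ p U)
    (hp0 : ∀ x ∈ U, p x ≠ 0)
    (hpsq : ∀ x ∈ U, p x ^ 2 = x.2.2.1 ^ 3 + x.1 * x.2.2.1 + x.2.1)
    (Xinf Yinf : ℂ × ℂ × ℂ × ℂ → ℂ × ℂ × ℂ × ℂ)
    (hX : ∀ y, Xinf y = (1, 0, -(y.2.2.2 / p y),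
      -((y.2.2.2 ^ 2 * (3 * y.2.2.1 ^ 2 + y.1) - y.2.2.1 * p y * y.2.2.2) /
          (2 * p y ^ 3))))
    (hY : ∀ y, Yinf y = (0, 1, 0, y.2.2.2 / (2 * p y ^ 2)))
    (φ₁ φ₂ : ℂ × ℂ × ℂ × ℂ → ℂ)
    (hφ₁ : ∀ y, φ₁ y = y.2.2.1 + y.1 * y.2.2.2 / p y)
    (hφ₂ : ∀ y, φ₂ y = y.2.2.2 / (2 * p y)) :
    ∀ x ∈ U,
      fderiv ℂ φ₁ x (Xinf x) = 0 ∧ fderiv ℂ φ₂ x (Xinf x) = 0 ∧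
      fderiv ℂ φ₁ x (Yinf x) = 0 ∧ fderiv ℂ φ₂ x (Yinf x) = 0 := by
  intro x hx
  have hUx := hU.mem_nhds hx
  have hpx := hp.differentiableAt hUx
  have hpx0 := hp0 x hx
  obtain rfl : φ₁ = A2.twistorCoord₁ p := funext hφ₁
  obtain rfl : φ₂ = A2.twistorCoord₂ p := funext hφ₂
  have hXφ₂ : fderiv ℂ (A2.twistorCoord₂ p) x (Xinf x) = 0 := by
    rw [A2.fderiv_twistorCoord₂_apply hpx hpx0,
      A2.fderiv_apply_of_sq_eq_cubic hUx hpx hpx0 hpsq, hX]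
    field_simp
    ring
  have hYφ₂ : fderiv ℂ (A2.twistorCoord₂ p) x (Yinf x) = 0 := by
    rw [A2.fderiv_twistorCoord₂_apply hpx hpx0,
      A2.fderiv_apply_of_sq_eq_cubic hUx hpx hpx0 hpsq, hY]
    field_simp
    ring
  refine ⟨?_, hXφ₂, ?_, hYφ₂⟩
  · rw [A2.fderiv_twistorCoord₁_apply hpx hpx0, hXφ₂, A2.twistorCoord₂, hX]
    field_simp
    ring
  · rw [A2.fderiv_twistorCoord₁_apply hpx hpx0, hYφ₂, hY]
    simp
end
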